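/- In the lazy tournament of a trivalent tree, if a label i loses the first round in which it competes, then i loses all subsequent rounds in which it competes (Losers Lemma). -/

import Mathlib

open SimpleGraph

/-- A candidate leaf-labeled graph on vertex set `Fin V` with `L` labeled leaves. -/
structure PreTree (L V : ℕ) where
  adj : Fin V → Fin V → Bool
  symm' : ∀ u v, adj u v = adj v u
  loopless' : ∀ v, adj v v = false
  leaf : Fin L → Fin V

def PreTree.G {L V : ℕ} (T : PreTree L V) : SimpleGraph (Fin V) where
  Adj u v := T.adj u v = true
  symm := ⟨fun u v h => by change T.adj v u = true; change T.adj u v = true at h; rw [T.symm']; exact h⟩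
  loopless := ⟨fun v h => by change T.adj v v = true at h; rw [T.loopless' v] at h; exact Bool.noConfusion h⟩

instance {L V : ℕ} (T : PreTree L V) : DecidableRel T.G.Adj :=
  fun u v => inferInstanceAs (Decidable (T.adj u v = true))

/-- `T` is a trivalent tree with leaves labeled bijectively by `Fin L`. -/
def PreTree.IsTrivalent {L V : ℕ} (T : PreTree L V) : Prop :=
  T.G.IsTree ∧ (∀ v, T.G.degree v = 1 ∨ T.G.degree v = 3) ∧
    Function.Injective T.leaf ∧ (∀ i, T.G.degree (T.leaf i) = 1) ∧
    (∀ v, T.G.degree v = 1 → ∃ i, T.leaf i = v)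

/-- Label-preserving isomorphism of leaf-labeled graphs. -/
def PreTree.Iso {L V : ℕ} (T T' : PreTree L V) : Prop :=
  ∃ σ : Fin V ≃ Fin V, (∀ u v, T'.adj (σ u) (σ v) = T.adj u v) ∧ ∀ i, σ (T.leaf i) = T'.leaf i

/-- Leaves `a = 0` and `b = 1` share a common (internal) vertex. -/
def PreTree.ABAdj {n V : ℕ} (T : PreTree (n+3) V) : Prop :=
  ∃ v, T.G.Adj (T.leaf 0) v ∧ T.G.Adj (T.leaf 1) v

/-- Number of isomorphism classes of leaf-labeled graphs satisfying `P`. -/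
noncomputable def classCount {L V : ℕ} (P : PreTree L V → Prop) : ℕ :=
  Nat.card (Quot fun (T T' : {T : PreTree L V // P T}) => PreTree.Iso T.1 T'.1)

/-- `w` separates `x` from `y` in `G`: every walk from `x` to `y` passes through `w`. -/
def Separates {V : Type*} (G : SimpleGraph V) (w x y : V) : Prop :=
  ∀ p : G.Walk x y, w ∈ p.support

/-- The laziness rule applies: the unlabeled edge `E` is adjacent to a labeled
edge carrying a label `u ≠ j` with `u > i`. -/
def LazyApplies {n : ℕ} (T : PreTree (n+3) (2*n+4))
    (lab : Sym2 (Fin (2*n+4)) → Option (Fin (n+3)))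
    (E : Sym2 (Fin (2*n+4))) (i j : Fin (n+3)) : Prop :=
  ∃ (e : Sym2 (Fin (2*n+4))) (u : Fin (n+3)) (v : Fin (2*n+4)),
    e ∈ T.G.edgeSet ∧ v ∈ e ∧ v ∈ E ∧ e ≠ E ∧ lab e = some u ∧ u ≠ j ∧ i < u

/-- A run of the lazy tournament on a tree with `n+3` leaves (labels ordered
`a = 0 < b = 1 < c = 2 < 1 = 3 < ⋯ < n = n+2` as elements of `Fin (n+3)`).
`lab t` is the edge labeling before round `t`; round `t` has `loser t < winner t`
on adjacent labeled edges `loserE t`, `winnerE t` sharing vertex `vtx t` with the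
unlabeled edge `newE t`, the pair having the maximal smaller label, and `newE t`
gets labeled according to the laziness rule. -/
structure Run (n : ℕ) (T : PreTree (n+3) (2*n+4)) where
  lab : ℕ → Sym2 (Fin (2*n+4)) → Option (Fin (n+3))
  loser : Fin n → Fin (n+3)
  winner : Fin n → Fin (n+3)
  loserE : Fin n → Sym2 (Fin (2*n+4))
  winnerE : Fin n → Sym2 (Fin (2*n+4))
  newE : Fin n → Sym2 (Fin (2*n+4))
  vtx : Fin n → Fin (2*n+4)
  init_leaf : ∀ (i : Fin (n+3)) (w : Fin (2*n+4)), T.G.Adj (T.leaf i) w →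
    lab 0 s(T.leaf i, w) = some i
  init_other : ∀ e : Sym2 (Fin (2*n+4)), (∀ i : Fin (n+3), T.leaf i ∉ e) → lab 0 e = none
  init_nonedge : ∀ e, e ∉ T.G.edgeSet → lab 0 e = none
  lt_lw : ∀ t, loser t < winner t
  loserE_mem : ∀ t, loserE t ∈ T.G.edgeSet
  winnerE_mem : ∀ t, winnerE t ∈ T.G.edgeSet
  newE_mem : ∀ t, newE t ∈ T.G.edgeSet
  lab_loserE : ∀ t, lab t.1 (loserE t) = some (loser t)
  lab_winnerE : ∀ t, lab t.1 (winnerE t) = some (winner t)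
  vtx_mem : ∀ t, vtx t ∈ loserE t ∧ vtx t ∈ winnerE t ∧ vtx t ∈ newE t
  edges_distinct : ∀ t, loserE t ≠ winnerE t ∧ loserE t ≠ newE t ∧ winnerE t ≠ newE t
  newE_unlabeled : ∀ t, lab t.1 (newE t) = none
  max_rule : ∀ (t : Fin n) (e1 e2 e3 : Sym2 (Fin (2*n+4))) (i j : Fin (n+3)) (v : Fin (2*n+4)),
    e1 ∈ T.G.edgeSet → e2 ∈ T.G.edgeSet → e3 ∈ T.G.edgeSet →
    lab t.1 e1 = some i → lab t.1 e2 = some j → lab t.1 e3 = none → i < j →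
    v ∈ e1 → v ∈ e2 → v ∈ e3 → e1 ≠ e2 → e1 ≠ e3 → e2 ≠ e3 →
    i ≤ loser t
  step_lazy : ∀ t : Fin n, LazyApplies T (lab t.1) (newE t) (loser t) (winner t) →
    lab (t.1+1) (newE t) = some (loser t)
  step_nonlazy : ∀ t : Fin n, ¬ LazyApplies T (lab t.1) (newE t) (loser t) (winner t) →
    lab (t.1+1) (newE t) = some (winner t)
  step_frame : ∀ (t : Fin n) (e : Sym2 (Fin (2*n+4))), e ≠ newE t → lab (t.1+1) e = lab t.1 e

/-- Number of rounds won by label `i`. -/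
def Run.wins {n : ℕ} {T : PreTree (n+3) (2*n+4)} (R : Run n T) (i : Fin (n+3)) : ℕ :=
  (Finset.univ.filter fun t : Fin n => R.winner t = i).card

/-- The element of `Fin (n+3)` corresponding to the numeric label `m+1 ∈ {1,…,n}`. -/
def lbl {n : ℕ} (m : Fin n) : Fin (n+3) := ⟨(m:ℕ)+3, by omega⟩

/-- `T ∈ Tour(k₁,…,kₙ)`. -/
def InTour {n : ℕ} (k : Fin n → ℕ) (T : PreTree (n+3) (2*n+4)) : Prop :=
  T.IsTrivalent ∧ T.ABAdj ∧ ∃ R : Run n T, ∀ m : Fin n, R.wins (lbl m) = k m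

/-- `|Tour(k₁,…,kₙ)|` (isomorphism classes). -/
noncomputable def TourCount {n : ℕ} (k : Fin n → ℕ) : ℕ := classCount (InTour k)

/-- `T'` is obtained from `T` by deleting the largest leaf and suppressing
the resulting degree-2 vertex `w`. -/
def DelLast (n : ℕ) (T : PreTree ((n+1)+3) (2*(n+1)+4)) (T' : PreTree (n+3) (2*n+4)) : Prop :=
  ∃ (g : Fin (2*n+4) → Fin (2*(n+1)+4)) (w : Fin (2*(n+1)+4)),
    Function.Injective g ∧
    T.G.Adj (T.leaf (Fin.last (n+3))) w ∧
    (∀ v, v ∈ Set.range g ↔ (v ≠ T.leaf (Fin.last (n+3)) ∧ v ≠ w)) ∧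
    (∀ u u' : Fin (2*n+4), T'.G.Adj u u' ↔
      (T.G.Adj (g u) (g u') ∨ (T.G.Adj (g u) w ∧ T.G.Adj (g u') w ∧ g u ≠ g u'))) ∧
    (∀ i : Fin (n+3), g (T'.leaf i) = T.leaf (Fin.castSucc i))

/-- `T'` is obtained from `T` by successively deleting the leaves `r+1, …, n`. -/
inductive Restricts : (n : ℕ) → (r : ℕ) → PreTree (n+3) (2*n+4) → PreTree (r+3) (2*r+4) → Prop
  | refl (n : ℕ) (T : PreTree (n+3) (2*n+4)) : Restricts n n T T
  | step (n r : ℕ) (T : PreTree ((n+1)+3) (2*(n+1)+4)) (T1 : PreTree (n+3) (2*n+4))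
      (T2 : PreTree (r+3) (2*r+4)) :
      DelLast n T T1 → Restricts n r T1 T2 → Restricts (n+1) r T T2

/-- The composition `k̃_j`: decrement `k j` and delete position `dpos`
(the rightmost zero of the result). -/
def tilde {n : ℕ} (k : Fin (n+1) → ℕ) (dpos : ℕ) (j : Fin (n+1)) : Fin n → ℕ :=
  fun m => if (m:ℕ) < dpos then Function.update k j (k j - 1) (Fin.castSucc m)
           else Function.update k j (k j - 1) (Fin.succ m)

/-- The map `π_lazy` relates `T` to the pair `(j, T')` where `j` is the winner of the
first round of the tournament, the two leaves that competed are deleted (the shared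
vertex becoming a new leaf) and the labels are shifted according to the (non)lazy case. -/
def PiLazyRel (n : ℕ) (k : Fin (n+1) → ℕ) (T : PreTree ((n+1)+3) (2*(n+1)+4))
    (j : Fin (n+1)) (T' : PreTree (n+3) (2*n+4)) : Prop :=
  ∃ (R : Run (n+1) T) (g : Fin (2*n+4) → Fin (2*(n+1)+4)),
    (∀ m : Fin (n+1), R.wins (lbl m) = k m) ∧
    R.winner ⟨0, Nat.succ_pos n⟩ = lbl j ∧
    Function.Injective g ∧
    (∀ v, v ∈ Set.range g ↔
      (v ≠ T.leaf (R.loser ⟨0, Nat.succ_pos n⟩) ∧ v ≠ T.leaf (R.winner ⟨0, Nat.succ_pos n⟩))) ∧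
    (∀ u u' : Fin (2*n+4), T'.G.Adj u u' ↔ T.G.Adj (g u) (g u')) ∧
    (if k j = 1 then
      ∀ β : Fin (n+3), g (T'.leaf β) =
        (if (β:ℕ) = ((R.loser ⟨0, Nat.succ_pos n⟩) : ℕ) then R.vtx ⟨0, Nat.succ_pos n⟩
         else if (β:ℕ) < ((R.winner ⟨0, Nat.succ_pos n⟩) : ℕ) then T.leaf (Fin.castSucc β)
         else T.leaf (Fin.succ β))
     else
      ∀ β : Fin (n+3), g (T'.leaf β) =
        (if (β:ℕ) < ((R.loser ⟨0, Nat.succ_pos n⟩) : ℕ) then T.leaf (Fin.castSucc β)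
         else if (β:ℕ)+1 = ((R.winner ⟨0, Nat.succ_pos n⟩) : ℕ) then R.vtx ⟨0, Nat.succ_pos n⟩
         else T.leaf (Fin.succ β)))

/-! ### Parking functions.
A parking function of size `n` is encoded by `col : Fin n → Fin n`, where `col x` is the
(0-indexed) column of the label `x+1`; the Dyck path condition (for paths from `(0,n)` to
`(n,0)` staying weakly above the diagonal, cells left of down steps) is `IsPF`. -/

def IsPF {n : ℕ} (col : Fin n → Fin n) : Prop :=
  ∀ j : Fin n, n - (j:ℕ) ≤ (Finset.univ.filter fun x => j ≤ col x).card

/-- Dominance index of label `x+1`: the number of columns strictly to its right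
containing no entry greater than `x+1` (empty columns count). -/
def domIdx {n : ℕ} (col : Fin n → Fin n) (x : Fin n) : ℕ :=
  (Finset.univ.filter fun j : Fin n => col x < j ∧ ∀ y, col y = j → y ≤ x).card

/-- Column-restricted: `x > d_x` for all labels `x` (label `x : Fin n` has value `x+1`). -/
def ColRes {n : ℕ} (col : Fin n → Fin n) : Prop := ∀ x : Fin n, domIdx col x < (x:ℕ) + 1

/-- Number of labels in column `j`. -/
def colCount {n : ℕ} (col : Fin n → Fin n) (j : Fin n) : ℕ :=
  (Finset.univ.filter fun x => col x = j).card

/-- `col'` is the image of `col` under the map `r`: remove the row containing the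
label `1`, decrement the remaining labels, and delete the rightmost empty column `E`. -/
def RSpec {n : ℕ} (col : Fin (n+1) → Fin (n+1)) (col' : Fin n → Fin n) : Prop :=
  ∃ E : Fin (n+1),
    (∀ y : Fin (n+1), y ≠ 0 → col y ≠ E) ∧
    (∀ j : Fin (n+1), (∀ y, y ≠ 0 → col y ≠ j) → j ≤ E) ∧
    (∀ x : Fin n, (col' x : ℕ) =
      if (col (Fin.succ x) : ℕ) < (E:ℕ) then (col (Fin.succ x) : ℕ)
      else (col (Fin.succ x) : ℕ) - 1)

/-- `col` is the parking function `τ(T)`: column `col m` contains label `m+1`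
iff the label `col m + 1` wins round `m+1` of the lazy tournament of `T`. -/
def TauRel {n : ℕ} (T : PreTree (n+3) (2*n+4)) (col : Fin n → Fin n) : Prop :=
  ∃ R : Run n T, ∀ t : Fin n, ((R.winner t) : ℕ) = (col t : ℕ) + 3

/-! Consider the first round `t` that `i` wins. The edge it wins from carries `i`, so it is either
the leaf edge of `i` or an edge `newE s` onto which `i` advanced in an earlier round `s`; as `i`
won nothing before `t`, that advance was lazy. No vertex hosts two rounds, so only one round is
played at a leaf edge, and for the leaf edge of `i` this is the round `t0` that `i` lost. After a
lazy advance, the far end of `newE s` carries a larger label which stays there, so by the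
maximality rule `i` loses the round played at that end. -/

lemma Sym2.eq_or_eq_of_mem {α : Type*} {z : Sym2 α} {a b c : α} (ha : a ∈ z) (hb : b ∈ z)
    (hc : c ∈ z) (hab : a ≠ b) : c = a ∨ c = b := by
  rw [(Sym2.mem_and_mem_iff hab).mp ⟨ha, hb⟩, Sym2.mem_iff] at hc
  exact hc

namespace PreTree.IsTrivalent

variable {L V : ℕ} {T : PreTree L V}

lemma leaf_adj_unique (hT : T.IsTrivalent) (x : Fin L) {w w' : Fin V}
    (hw : T.G.Adj (T.leaf x) w) (hw' : T.G.Adj (T.leaf x) w') : w = w' := by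
  have hcard : (T.G.neighborFinset (T.leaf x)).card ≤ 1 := by
    rw [SimpleGraph.card_neighborFinset_eq_degree, hT.2.2.2.1 x]
  exact Finset.card_le_one.mp hcard w (by simpa using hw) w' (by simpa using hw')

lemma incident_eq_of_three (hT : T.IsTrivalent) {v : Fin V} {e₁ e₂ e₃ : Sym2 (Fin V)}
    (h₁ : e₁ ∈ T.G.edgeSet) (h₂ : e₂ ∈ T.G.edgeSet) (h₃ : e₃ ∈ T.G.edgeSet)
    (hv₁ : v ∈ e₁) (hv₂ : v ∈ e₂) (hv₃ : v ∈ e₃)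
    (h₁₂ : e₁ ≠ e₂) (h₁₃ : e₁ ≠ e₃) (h₂₃ : e₂ ≠ e₃) :
    T.G.degree v = 3 ∧ ∀ e ∈ T.G.edgeSet, v ∈ e → e = e₁ ∨ e = e₂ ∨ e = e₃ := by
  classical
  have hsub : ({e₁, e₂, e₃} : Finset _) ⊆ T.G.incidenceFinset v := by
    intro e he
    simp only [Finset.mem_insert, Finset.mem_singleton] at he
    rw [SimpleGraph.mem_incidenceFinset]
    rcases he with rfl | rfl | rfl
    exacts [⟨h₁, hv₁⟩, ⟨h₂, hv₂⟩, ⟨h₃, hv₃⟩]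
  have hcard : ({e₁, e₂, e₃} : Finset _).card = 3 := by
    rw [Finset.card_insert_of_notMem (by simp [h₁₂, h₁₃]),
      Finset.card_insert_of_notMem (by simp [h₂₃]), Finset.card_singleton]
  have hdeg : T.G.degree v = 3 := by
    have := Finset.card_le_card hsub
    rw [hcard, SimpleGraph.card_incidenceFinset_eq_degree] at this
    rcases hT.2.1 v with h | h <;> omega
  have heq : ({e₁, e₂, e₃} : Finset _) = T.G.incidenceFinset v :=
    Finset.eq_of_subset_of_card_le hsub
      (by rw [SimpleGraph.card_incidenceFinset_eq_degree, hdeg, hcard])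
  refine ⟨hdeg, fun e he hve => ?_⟩
  have : e ∈ ({e₁, e₂, e₃} : Finset _) := by
    rw [heq, SimpleGraph.mem_incidenceFinset]; exact ⟨he, hve⟩
  simpa using this

end PreTree.IsTrivalent

namespace Run

variable {n : ℕ} {T : PreTree (n+3) (2*n+4)} (R : Run n T)

lemma lab_mono {e : Sym2 (Fin (2*n+4))} {x : Fin (n+3)} {s t : ℕ} (hst : s ≤ t) (htn : t ≤ n)
    (h : R.lab s e = some x) : R.lab t e = some x := by
  induction t, hst using Nat.le_induction with
  | base => exact h
  | succ t hst ih =>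
    have ht : t < n := htn
    by_cases he : e = R.newE ⟨t, ht⟩
    · have := ih ht.le
      rw [he, R.newE_unlabeled ⟨t, ht⟩] at this
      exact absurd this.symm (Option.some_ne_none _)
    · rw [R.step_frame ⟨t, ht⟩ e he]; exact ih ht.le

lemma lab_succ_newE (s : Fin n) :
    R.lab (s + 1) (R.newE s) = some (R.loser s) ∨
    R.lab (s + 1) (R.newE s) = some (R.winner s) := by
  by_cases hl : LazyApplies T (R.lab s) (R.newE s) (R.loser s) (R.winner s)
  · exact Or.inl (R.step_lazy s hl)
  · exact Or.inr (R.step_nonlazy s hl)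

lemma eq_leafEdge_or_newE_of_lab_eq_some {t : ℕ} (htn : t ≤ n) {e : Sym2 (Fin (2*n+4))}
    {x : Fin (n+3)} (he : R.lab t e = some x) :
    (∃ w, T.G.Adj (T.leaf x) w ∧ e = s(T.leaf x, w)) ∨
      ∃ s : Fin n, (s : ℕ) < t ∧ e = R.newE s ∧ R.lab (s + 1) (R.newE s) = some x := by
  induction t generalizing e with
  | zero =>
    left
    by_cases hmem : e ∈ T.G.edgeSet
    · by_cases hleaf : ∀ j, T.leaf j ∉ e
      · rw [R.init_other e hleaf] at he; exact absurd he.symm (Option.some_ne_none _)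
      · obtain ⟨j, hj⟩ := not_forall_not.mp hleaf
        obtain ⟨w, rfl⟩ := Sym2.mem_iff_exists.mp hj
        have hadj : T.G.Adj (T.leaf j) w := hmem
        obtain rfl : j = x := Option.some.inj ((R.init_leaf j w hadj).symm.trans he)
        exact ⟨w, hadj, rfl⟩
    · rw [R.init_nonedge e hmem] at he; exact absurd he.symm (Option.some_ne_none _)
  | succ t ih =>
    have ht : t < n := htn
    by_cases hne : e = R.newE ⟨t, ht⟩
    · exact Or.inr ⟨⟨t, ht⟩, t.lt_succ_self, hne, hne ▸ he⟩
    · rw [R.step_frame ⟨t, ht⟩ e hne] at he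
      rcases ih ht.le he with h | ⟨s, hs, h⟩
      · exact Or.inl h
      · exact Or.inr ⟨s, by omega, h⟩

lemma incident_vtx (hT : T.IsTrivalent) (t : Fin n) :
    T.G.degree (R.vtx t) = 3 ∧
      ∀ e ∈ T.G.edgeSet, R.vtx t ∈ e → e = R.loserE t ∨ e = R.winnerE t ∨ e = R.newE t :=
  hT.incident_eq_of_three (R.loserE_mem t) (R.winnerE_mem t) (R.newE_mem t)
    (R.vtx_mem t).1 (R.vtx_mem t).2.1 (R.vtx_mem t).2.2
    (R.edges_distinct t).1 (R.edges_distinct t).2.1 (R.edges_distinct t).2.2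

lemma vtx_ne_leaf (hT : T.IsTrivalent) (t : Fin n) (x : Fin (n+3)) : R.vtx t ≠ T.leaf x := by
  intro h
  have := (R.incident_vtx hT t).1
  rw [h, hT.2.2.2.1 x] at this
  omega

/-- After round `s` all three edges at `vtx s` are labeled, so no later round is played there. -/
lemma vtx_injective (hT : T.IsTrivalent) : Function.Injective R.vtx := by
  suffices h : ∀ s t, s < t → R.vtx t ≠ R.vtx s by
    intro s t hst
    by_contra hne
    rcases lt_or_gt_of_ne hne with hlt | hlt
    exacts [h s t hlt hst.symm, h t s hlt hst]
  intro s t hst hv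
  have hlabeled : ∃ x, R.lab t (R.newE t) = some x := by
    rcases (R.incident_vtx hT s).2 _ (R.newE_mem t) (hv ▸ (R.vtx_mem t).2.2) with h | h | h
    · exact ⟨_, h ▸ R.lab_mono hst.le t.2.le (R.lab_loserE s)⟩
    · exact ⟨_, h ▸ R.lab_mono hst.le t.2.le (R.lab_winnerE s)⟩
    · rcases R.lab_succ_newE s with h' | h' <;> exact ⟨_, h ▸ R.lab_mono hst t.2.le h'⟩
  obtain ⟨x, hx⟩ := hlabeled
  exact absurd (R.newE_unlabeled t ▸ hx).symm (Option.some_ne_none x)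

lemma eq_of_vtx_mem_leafEdge (hT : T.IsTrivalent) {x : Fin (n+3)} {w w' : Fin (2*n+4)}
    (hw : T.G.Adj (T.leaf x) w) (hw' : T.G.Adj (T.leaf x) w') {s t : Fin n}
    (hs : R.vtx s ∈ s(T.leaf x, w)) (ht : R.vtx t ∈ s(T.leaf x, w')) : s = t := by
  rw [Sym2.mem_iff] at hs ht
  have hs' := hs.resolve_left (R.vtx_ne_leaf hT s x)
  have ht' := ht.resolve_left (R.vtx_ne_leaf hT t x)
  exact R.vtx_injective hT (by rw [hs', ht', hT.leaf_adj_unique x hw hw'])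

lemma winnerE_ne_newE_of_lab_succ_eq_loser (hT : T.IsTrivalent) {s t : Fin n} (hst : s < t)
    (hlab : R.lab (s + 1) (R.newE s) = some (R.loser s)) : R.winnerE t ≠ R.newE s := by
  intro hwt
  have hlazy : LazyApplies T (R.lab s) (R.newE s) (R.loser s) (R.winner s) := by
    by_contra hnl
    rw [R.step_nonlazy s hnl] at hlab
    exact (R.lt_lw s).ne' (Option.some.inj hlab)
  obtain ⟨e, u, v, he, hve, hvE, heE, hlabe, huw, hlu⟩ := hlazy
  have hv : v ≠ R.vtx s := by
    rintro rfl
    rcases (R.incident_vtx hT s).2 e he hve with rfl | rfl | rfl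
    · rw [R.lab_loserE] at hlabe; exact hlu.ne (Option.some.inj hlabe)
    · rw [R.lab_winnerE] at hlabe; exact huw (Option.some.inj hlabe).symm
    · exact heE rfl
  have hvt : R.vtx t = v :=
    (Sym2.eq_or_eq_of_mem hvE (R.vtx_mem s).2.2 (hwt ▸ (R.vtx_mem t).2.1) hv).resolve_right
      ((R.vtx_injective hT).ne (ne_of_gt hst))
  have hlabt : R.lab t e = some u := R.lab_mono (le_of_lt hst) t.2.le hlabe
  have hwin : R.lab t (R.winnerE t) = some (R.loser s) := by
    rw [hwt]; exact R.lab_mono (Nat.succ_le_of_lt hst) t.2.le hlab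
  have hle : R.loser s ≤ R.loser t :=
    R.max_rule t _ e _ _ u v (R.winnerE_mem t) he (R.newE_mem t) hwin hlabt
      (R.newE_unlabeled t) hlu (hwt ▸ hvE) hve (hvt ▸ (R.vtx_mem t).2.2)
      (by rw [hwt]; exact heE.symm)
      (R.edges_distinct t).2.2
      (fun h => by rw [h, R.newE_unlabeled] at hlabt; exact Option.some_ne_none _ hlabt.symm)
  have hwinner : R.winner t = R.loser s := Option.some.inj ((R.lab_winnerE t).symm.trans hwin)
  exact (R.lt_lw t).not_ge (hwinner ▸ hle)

end Run

/-- **Losers Lemma.** If a label loses the first round in which it competes,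
it loses all subsequent rounds in which it competes. -/
theorem losers_lose (n : ℕ) (T : PreTree (n+3) (2*n+4)) (hT : T.IsTrivalent)
    (R : Run n T) (i : Fin (n+3)) (t0 : Fin n)
    (hlose : R.loser t0 = i)
    (hfirst : ∀ t : Fin n, t < t0 → R.loser t ≠ i ∧ R.winner t ≠ i) :
    ∀ t : Fin n, (R.loser t = i ∨ R.winner t = i) → R.loser t = i := by
  obtain ⟨w₀, hw₀, he₀⟩ : ∃ w, T.G.Adj (T.leaf i) w ∧ R.loserE t0 = s(T.leaf i, w) := by
    rcases R.eq_leafEdge_or_newE_of_lab_eq_some t0.2.le (hlose ▸ R.lab_loserE t0) with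
      h | ⟨s, hs, -, hlab⟩
    · exact h
    · rcases R.lab_succ_newE s with h | h <;> rw [h, Option.some.injEq] at hlab
      exacts [absurd hlab (hfirst s hs).1, absurd hlab (hfirst s hs).2]
  have hwin : ∀ t, R.winner t ≠ i := by
    intro t
    induction t using WellFoundedLT.induction with
    | _ t ih =>
      intro hti
      rcases R.eq_leafEdge_or_newE_of_lab_eq_some t.2.le (hti ▸ R.lab_winnerE t) with
        ⟨w, hw, he⟩ | ⟨s, hst, he, hlab⟩
      · obtain rfl : t0 = t := R.eq_of_vtx_mem_leafEdge hT hw₀ hw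
          (he₀ ▸ (R.vtx_mem t0).1) (he ▸ (R.vtx_mem t).2.1)
        exact (R.lt_lw t0).ne (hlose.trans hti.symm)
      · have hls : R.loser s = i := by
          rcases R.lab_succ_newE s with h | h <;> rw [h, Option.some.injEq] at hlab
          exacts [hlab, absurd hlab (ih s hst)]
        exact R.winnerE_ne_newE_of_lab_succ_eq_loser hT hst (hls ▸ hlab) he
  exact fun t ht => ht.resolve_right (hwin t)
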